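/- arXiv:2004.01713 — 3 statements merged into one kernel-verified Lean document; each statement's English description precedes it below -/
import Mathlib

section
/- Let p ≥ 2 be an integer, 0 < κ < 1, and S_i = ⌊(i+1)^{1/κ-1}⌋. Define m₀(n) = ∏_{i=0}^{n-2}(p^{S_i}+p-1). Suppose n(m) is chosen so that m₀(n) < m ≤ m₀(n+1)·(p^{S_{n-1}}+p-1) for a sequence m → ∞ (i.e. wt(v_{n-1}) < m ≤ wt(v_n)). Then n ≤ ((1+o(1))/(κ·ln p) · ln m)^κ as m → ∞. -/
/-!
Write `q = 1/κ > 1`. Every factor of `w k` is at least `p ^ S i`, so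
`log (w k) ≥ log p * ∑_{i<k} S i ≥ log p * (k^q / q - k)`: each floor loses less than `1`, and
`∑_{i<k} (i+1)^(q-1) ≥ ∫₀ᵏ x^(q-1) dx = k^q / q`. Taking `k = n - 1`, where `w k < m`, gives
`(k^q - q k) * log p ≤ q * log m`. Since `q > 1`, `(k+1)^q ∼ k^q - q k`, and `k → ∞` because
`m ≤ w n`; hence `n^q ≤ (1 + o(1)) * q * log m / log p`, which is the claim after raising
both sides to the power `κ`.
-/

open Filter Asymptotics Topology

lemma rpow_add_one_div_le_sum_rpow {r : ℝ} (hr : 0 ≤ r) (N : ℕ) :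
    (N : ℝ) ^ (r + 1) / (r + 1) ≤ ∑ i ∈ Finset.range N, ((i : ℝ) + 1) ^ r := by
  have hmono : MonotoneOn (fun x : ℝ => x ^ r) (Set.Icc 0 (0 + N)) :=
    (Real.monotoneOn_rpow_Ici_of_exponent_nonneg hr).mono fun x hx => hx.1
  have := hmono.integral_le_sum
  rw [zero_add, integral_rpow (Or.inl (by linarith)), Real.zero_rpow (by linarith),
    sub_zero] at this
  simpa [add_comm] using this

lemma sum_sub_card_le_sum_natFloor {ι : Type*} (s : Finset ι) (f : ι → ℝ) :
    ∑ i ∈ s, f i - s.card ≤ ∑ i ∈ s, (⌊f i⌋₊ : ℝ) := by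
  rw [sub_le_iff_le_add, Finset.card_eq_sum_ones, Nat.cast_sum, ← Finset.sum_add_distrib]
  exact Finset.sum_le_sum fun i _ => by simpa using (Nat.lt_floor_add_one (f i)).le

lemma pow_sum_le_prod_pow_add_sub_one {ι : Type*} (s : Finset ι) (a : ι → ℕ) {p : ℕ}
    (hp : 1 ≤ p) : p ^ (∑ i ∈ s, a i) ≤ ∏ i ∈ s, (p ^ a i + p - 1) := by
  rw [← Finset.prod_pow_eq_pow_sum]
  exact Finset.prod_le_prod' fun i _ => by omega

lemma rpow_sub_mul_mul_log_le_mul_log_of_prod_le {p : ℕ} (hp : 1 ≤ p) {q : ℝ} (hq : 1 ≤ q)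
    {k M : ℕ}
    (hM : ∏ i ∈ Finset.range k, (p ^ ⌊((i : ℝ) + 1) ^ (q - 1)⌋₊ + p - 1) ≤ M) :
    ((k : ℝ) ^ q - q * k) * Real.log p ≤ q * Real.log M := by
  set s := ∑ i ∈ Finset.range k, ⌊((i : ℝ) + 1) ^ (q - 1)⌋₊
  have hsum : (k : ℝ) ^ q - q * k ≤ q * s := by
    have hint := rpow_add_one_div_le_sum_rpow (sub_nonneg.2 hq) k
    have hfloor :=
      sum_sub_card_le_sum_natFloor (Finset.range k) fun i : ℕ => ((i : ℝ) + 1) ^ (q - 1)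
    rw [sub_add_cancel, div_le_iff₀' (by linarith)] at hint
    rw [Finset.card_range] at hfloor
    push_cast [s]
    nlinarith
  have hlog : s * Real.log p ≤ Real.log M := by
    have hpow : p ^ s ≤ M := (pow_sum_le_prod_pow_add_sub_one _ _ hp).trans hM
    rw [← Real.log_pow, ← Nat.cast_pow]
    exact Real.log_le_log (by positivity) (Nat.cast_le.2 hpow)
  have hlogp : 0 ≤ Real.log p := Real.log_nonneg (by exact_mod_cast hp)
  calc ((k : ℝ) ^ q - q * k) * Real.log p ≤ q * s * Real.log p :=
        mul_le_mul_of_nonneg_right hsum hlogp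
    _ ≤ q * Real.log M := by
        rw [mul_assoc]; exact mul_le_mul_of_nonneg_left hlog (by linarith)

lemma monotone_prod_range_of_one_le {M : Type*} [CommMonoid M] [PartialOrder M]
    [IsOrderedMonoid M] {f : ℕ → M} (hf : ∀ i, 1 ≤ f i) :
    Monotone fun n => ∏ i ∈ Finset.range n, f i := fun _ _ hab =>
  Finset.prod_le_prod_of_subset_of_one_le' (Finset.range_subset_range.2 hab) fun i _ _ => hf i

lemma Monotone.tendsto_atTop_of_eventually_le_comp {w n : ℕ → ℕ} (hw : Monotone w)
    (h : ∀ᶠ m in atTop, m ≤ w (n m)) :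
    Tendsto n atTop atTop := by
  refine tendsto_atTop.2 fun b => ?_
  filter_upwards [h, eventually_gt_atTop (w b)] with m hm hb
  by_contra! hlt
  exact (hm.trans (hw hlt.le)).not_gt hb

lemma natCast_isLittleO_rpow {q : ℝ} (hq : 1 < q) :
    (fun k : ℕ => (k : ℝ)) =o[atTop] fun k => (k : ℝ) ^ q := by
  have h : (fun _ : ℕ => (1 : ℝ)) =o[atTop] fun k => (k : ℝ) ^ (q - 1) :=
    (isLittleO_one_left_iff ℝ).2 <| tendsto_norm_atTop_atTop.comp <|
      (tendsto_rpow_atTop (by linarith)).comp tendsto_natCast_atTop_atTop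
  refine ((isBigO_refl (fun k : ℕ => (k : ℝ)) atTop).mul_isLittleO h).congr' ?_ ?_
  · simp
  · filter_upwards [eventually_gt_atTop 0] with k hk
    rw [← Real.rpow_one_add' (by positivity) (by linarith), add_sub_cancel]

lemma isEquivalent_add_one_rpow_rpow_sub_mul {q : ℝ} (hq : 1 < q) (c : ℝ) :
    (fun k : ℕ => ((k : ℝ) + 1) ^ q) ~[atTop] fun k => (k : ℝ) ^ q - c * k := by
  have hsucc : (fun k : ℕ => (k : ℝ) + 1) ~[atTop] fun k => (k : ℝ) :=
    IsEquivalent.refl.add_const_of_norm_tendsto_atTop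
      (tendsto_norm_atTop_atTop.comp tendsto_natCast_atTop_atTop)
  have hlin := (natCast_isLittleO_rpow hq).const_mul_left c
  exact (hsucc.rpow fun k => Nat.cast_nonneg k).trans
    (IsEquivalent.refl.sub_isLittleO hlin).symm

lemma Asymptotics.IsEquivalent.eventually_le_one_add_mul {α : Type*} {l : Filter α}
    {u v : α → ℝ} (h : u ~[l] v) (hv : ∀ᶠ x in l, 0 ≤ v x) {δ : ℝ} (hδ : 0 < δ) :
    ∀ᶠ x in l, u x ≤ (1 + δ) * v x := by
  filter_upwards [h.isLittleO.bound hδ, hv] with x hx hvx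
  rw [Pi.sub_apply, Real.norm_eq_abs, Real.norm_eq_abs, abs_of_nonneg hvx] at hx
  linarith [le_abs_self (u x - v x)]

lemma exists_tendsto_zero_le_one_add_mul {α : Type*} {l : Filter α} {f g : α → ℝ}
    (hg : ∀ᶠ x in l, 0 < g x) (h : ∀ δ > 0, ∀ᶠ x in l, f x ≤ (1 + δ) * g x) :
    ∃ ε : α → ℝ, Tendsto ε l (𝓝 0) ∧ ∀ᶠ x in l, f x ≤ (1 + ε x) * g x := by
  refine ⟨fun x => max 0 (f x / g x - 1), tendsto_order.2 ⟨fun a ha => ?_, fun a ha => ?_⟩, ?_⟩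
  · exact Eventually.of_forall fun x => ha.trans_le (le_max_left _ _)
  · filter_upwards [h (a / 2) (by linarith), hg] with x hx hgx
    refine max_lt ha ?_
    rw [sub_lt_iff_lt_add, div_lt_iff₀ hgx]
    nlinarith
  · filter_upwards [hg] with x hgx
    rw [← div_le_iff₀ hgx]
    linarith [le_max_right 0 (f x / g x - 1)]

theorem stmt_9 (p : ℕ) (hp : 2 ≤ p) (κ : ℝ) (hκ0 : 0 < κ) (hκ1 : κ < 1)
    (S : ℕ → ℕ) (hS : ∀ i : ℕ, S i = ⌊((i : ℝ) + 1) ^ (1 / κ - 1)⌋₊)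
    (w : ℕ → ℕ) (hw : ∀ n, w n = ∏ i ∈ Finset.range n, (p ^ S i + p - 1))
    (n : ℕ → ℕ) (hn : ∀ m : ℕ, 2 ≤ m → w (n m - 1) < m ∧ m ≤ w (n m) ∧ 1 ≤ n m) :
    ∃ ε : ℕ → ℝ, Tendsto ε atTop (nhds 0) ∧
      ∀ᶠ m : ℕ in atTop,
        (n m : ℝ) ≤ ((1 + ε m) / (κ * Real.log p) * Real.log m) ^ κ := by
  have hq : 1 < 1 / κ := one_lt_one_div hκ0 hκ1
  have hlogp : 0 < Real.log p := Real.log_pos (by exact_mod_cast hp)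
  have hwmono : Monotone w := by
    rw [funext hw]
    exact monotone_prod_range_of_one_le fun i => by
      have := Nat.one_le_pow (S i) p (by omega); omega
  have hk : Tendsto (fun m => n m - 1) atTop atTop := (tendsto_sub_atTop_nat 1).comp <|
    hwmono.tendsto_atTop_of_eventually_le_comp <|
      (eventually_ge_atTop 2).mono fun m hm => (hn m hm).2.1
  have hupper : ∀ δ > 0, ∀ᶠ m in atTop,
      (n m : ℝ) ^ (1 / κ) ≤ (1 + δ) * (1 / κ * Real.log m / Real.log p) := by
    intro δ hδ
    have hequiv := (isEquivalent_add_one_rpow_rpow_sub_mul hq (1 / κ)).comp_tendsto hk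
    filter_upwards [hequiv.eventually_le_one_add_mul (hequiv.symm.eventually_nonneg
      (Eventually.of_forall fun _ => Real.rpow_nonneg (by positivity) _)) hδ,
      eventually_ge_atTop 2] with m hm hm2
    have hlower := (le_div_iff₀ hlogp).2 <| rpow_sub_mul_mul_log_le_mul_log_of_prod_le
      (by omega : 1 ≤ p) hq.le (by simpa only [hw, hS] using (hn m hm2).1.le)
    rw [← Nat.sub_add_cancel (hn m hm2).2.2, Nat.cast_add_one]
    exact hm.trans (mul_le_mul_of_nonneg_left hlower (by linarith))
  have hpos : ∀ᶠ m : ℕ in atTop, 0 < 1 / κ * Real.log m / Real.log p :=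
    (eventually_ge_atTop 2).mono fun m hm =>
      div_pos (mul_pos (one_pos.trans hq) (Real.log_pos (by exact_mod_cast hm))) hlogp
  obtain ⟨ε, hε, hle⟩ := exists_tendsto_zero_le_one_add_mul hpos hupper
  refine ⟨ε, hε, hle.mono fun m hm => ?_⟩
  calc (n m : ℝ) = ((n m : ℝ) ^ (1 / κ)) ^ κ := by
        rw [← Real.rpow_mul (Nat.cast_nonneg _), one_div_mul_cancel hκ0.ne', Real.rpow_one]
    _ ≤ _ := Real.rpow_le_rpow (by positivity) (hm.trans_eq (by ring)) hκ0.le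
end

section
/- Let p ≥ 2 and let S, R be positive integers. Define λ(S,R) = (S+2R)·ln p / ln(p^S + p^R - 1). Then 1 ≤ λ(S,R) ≤ 3 for all S, R ≥ 1. -/
theorem stmt_14 (p : ℕ) (hp : 2 ≤ p) (S R : ℕ) (hS : 1 ≤ S) (hR : 1 ≤ R) :
    1 ≤ ((S : ℝ) + 2 * R) * Real.log p / Real.log ((p : ℝ) ^ S + (p : ℝ) ^ R - 1) ∧
    ((S : ℝ) + 2 * R) * Real.log p / Real.log ((p : ℝ) ^ S + (p : ℝ) ^ R - 1) ≤ 3 := by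
  have hp2 : (2:ℝ) ≤ (p:ℝ) := by exact_mod_cast hp
  have hp1 : (1:ℝ) ≤ (p:ℝ) := by linarith
  have ha : (2:ℝ) ≤ (p:ℝ)^S := le_trans hp2 (le_self_pow₀ hp1 (by omega))
  have hb : (2:ℝ) ≤ (p:ℝ)^R := le_trans hp2 (le_self_pow₀ hp1 (by omega))
  set a := (p:ℝ)^S with hadef
  set b := (p:ℝ)^R with hbdef
  have hx1 : (1:ℝ) < a + b - 1 := by linarith
  have hx0 : (0:ℝ) < a + b - 1 := by linarith
  have hlogx : 0 < Real.log (a + b - 1) := Real.log_pos hx1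
  have heq : ((S:ℝ) + 2 * R) * Real.log p = Real.log (a * b ^ 2) := by
    have h : a * b ^ 2 = (p:ℝ) ^ (S + 2 * R) := by
      rw [hadef, hbdef, pow_add, pow_mul]; ring
    rw [h, Real.log_pow]
    push_cast
    ring
  have key1 : a + b - 1 ≤ a * b ^ 2 := by
    have h := mul_nonneg (show (0:ℝ) ≤ b - 1 by linarith)
      (show (0:ℝ) ≤ a * (b + 1) - 1 by nlinarith)
    nlinarith [h]
  have key2 : a * b ^ 2 ≤ (a + b - 1) ^ 3 := by
    nlinarith [sq_nonneg (a - b), sq_nonneg (a + b - 3), mul_nonneg (sub_nonneg.2 ha) (sub_nonneg.2 hb), sq_nonneg (a - 1), sq_nonneg (b - 1), mul_nonneg (mul_nonneg (sub_nonneg.2 ha) (sub_nonneg.2 hb)) (sub_nonneg.2 hb)]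
  constructor
  · rw [le_div_iff₀ hlogx, one_mul, heq]
    exact Real.log_le_log hx0 key1
  · rw [div_le_iff₀ hlogx, heq]
    have h : Real.log (a * b ^ 2) ≤ Real.log ((a + b - 1) ^ 3) :=
      Real.log_le_log (by positivity) key2
    rw [Real.log_pow] at h
    push_cast at h
    linarith
end

section
/- Let p ≥ 2 be an integer. The set {(S+2R)·ln p / ln(p^S + p^R - 1) : S, R ∈ ℕ, S, R ≥ 1} is dense in the interval [1, 3]. -/
/-!
Write `x = 1 + 2t` with `t ∈ [0, 1]` and take `S = n`, `R = ⌊tn⌋ + 1`. Since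
`pⁿ ≤ pⁿ + pᴿ - 1 ≤ 2p · pⁿ`, the denominator is `n log p + O(1)`, so
`λ(n, R) = (1 + 2R/n) / (1 + O(1/n)) → 1 + 2t`.
-/

open Filter Topology Real

/-- The Gelfand–Kirillov dimension `λ(S, R)` of the clover algebra `T(S, R)`. -/
noncomputable def cloverGKDim (p : ℝ) (S R : ℕ) : ℝ :=
  ((S : ℝ) + 2 * R) * log p / log (p ^ S + p ^ R - 1)

lemma tendsto_floor_mul_add_one_div {t : ℝ} (ht : 0 ≤ t) :
    Tendsto (fun n : ℕ => ((⌊t * n⌋₊ + 1 : ℕ) : ℝ) / n) atTop (𝓝 t) := by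
  have hfloor := (tendsto_nat_floor_mul_div_atTop ht).comp tendsto_natCast_atTop_atTop
  simpa [add_div] using hfloor.add (tendsto_one_div_atTop_nhds_zero_nat (𝕜 := ℝ))

lemma tendsto_log_pow_add_pow_sub_one_div {p : ℝ} (hp : 1 < p) {R : ℕ → ℕ}
    (hR : ∀ n, R n ≤ n + 1) :
    Tendsto (fun n : ℕ => log (p ^ n + p ^ R n - 1) / n) atTop (𝓝 (log p)) := by
  have hp0 : 0 < p := by linarith
  have hupper : Tendsto (fun n : ℕ => log p + log (2 * p) / n) atTop (𝓝 (log p)) := by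
    simpa using tendsto_const_nhds.add (tendsto_const_div_atTop_nhds_zero_nat (log (2 * p)))
  refine tendsto_of_tendsto_of_tendsto_of_le_of_le' tendsto_const_nhds hupper ?_ ?_
  all_goals
    filter_upwards [eventually_gt_atTop 0] with n hn
    have hn' : (0 : ℝ) < n := by exact_mod_cast hn
    have hpn : 0 < p ^ n := pow_pos hp0 n
    have hpR : 1 ≤ p ^ R n := one_le_pow₀ hp.le
  · rw [le_div_iff₀ hn', mul_comm, ← log_pow]
    exact log_le_log hpn (by linarith)
  · have hA : p ^ n + p ^ R n - 1 ≤ 2 * p * p ^ n := by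
      have : p ^ R n ≤ p * p ^ n := by
        rw [← pow_succ']; exact pow_le_pow_right₀ hp.le (hR n)
      nlinarith
    rw [div_le_iff₀ hn', add_mul, div_mul_cancel₀ _ hn'.ne', mul_comm, ← log_pow,
      ← log_mul hpn.ne' (by positivity), mul_comm]
    exact log_le_log (by linarith) hA

lemma tendsto_cloverGKDim {p : ℝ} (hp : 1 < p) {R : ℕ → ℕ} (hR : ∀ n, R n ≤ n + 1) {t : ℝ}
    (hRt : Tendsto (fun n : ℕ => (R n : ℝ) / n) atTop (𝓝 t)) :
    Tendsto (fun n : ℕ => cloverGKDim p n (R n)) atTop (𝓝 (1 + 2 * t)) := by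
  have hlogp : log p ≠ 0 := (log_pos hp).ne'
  have hquot := (((tendsto_const_nhds (x := (1 : ℝ))).add (hRt.const_mul 2)).mul_const
    (log p)).div (tendsto_log_pow_add_pow_sub_one_div hp hR) hlogp
  rw [mul_div_cancel_right₀ _ hlogp] at hquot
  refine hquot.congr' ?_
  filter_upwards [eventually_gt_atTop 0] with n hn
  have hn' : (n : ℝ) ≠ 0 := by positivity
  simp only [Pi.div_apply, cloverGKDim]
  field_simp

theorem stmt_15 (p : ℕ) (hp : 2 ≤ p) :
    ∀ x ∈ Set.Icc (1 : ℝ) 3, x ∈ closure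
      {l : ℝ | ∃ S R : ℕ, 1 ≤ S ∧ 1 ≤ R ∧
        l = ((S : ℝ) + 2 * R) * Real.log p / Real.log ((p : ℝ) ^ S + (p : ℝ) ^ R - 1)} := by
  rintro x ⟨hx1, hx3⟩
  obtain ⟨t, rfl⟩ : ∃ t, x = 1 + 2 * t := ⟨(x - 1) / 2, by ring⟩
  have hp' : (1 : ℝ) < p := by exact_mod_cast hp
  have hR : ∀ n : ℕ, ⌊t * n⌋₊ + 1 ≤ n + 1 := fun n =>
    Nat.add_le_add_right (Nat.floor_le_of_le (by nlinarith)) 1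
  have hlim := tendsto_cloverGKDim hp' hR (tendsto_floor_mul_add_one_div (by linarith))
  refine mem_closure_of_tendsto hlim ?_
  filter_upwards [eventually_ge_atTop 1] with n hn
  exact ⟨n, _, hn, Nat.le_add_left 1 _, rfl⟩
end
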